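/- The abelianization Fbr/[Fbr,Fbr] of the braided Thompson group Fbr is generated by the images of the four elements x_0, x_1, β_{1,3} and α_{1,2}. -/

import Mathlib

namespace BrThompson

/-- Generators of the braided Thompson group `Fbr`: `x i` for `i ≥ 0`,
and `a i j`, `b i j` (the α- and β-generators) for `1 ≤ i < j`. -/
inductive FbrGen : Type
  | x : ℕ → FbrGen
  | a : (i j : ℕ) → 1 ≤ i → i < j → FbrGen
  | b : (i j : ℕ) → 1 ≤ i → i < j → FbrGen

/-- The generator `x i` as an element of the free group. -/
def xg (i : ℕ) : FreeGroup FbrGen := FreeGroup.of (FbrGen.x i)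

/-- The generator `α i j` as an element of the free group (junk value `1` for invalid indices). -/
def ag (i j : ℕ) : FreeGroup FbrGen :=
  if h : 1 ≤ i ∧ i < j then FreeGroup.of (FbrGen.a i j h.1 h.2) else 1

/-- The generator `β i j` as an element of the free group (junk value `1` for invalid indices). -/
def bg (i j : ℕ) : FreeGroup FbrGen :=
  if h : 1 ≤ i ∧ i < j then FreeGroup.of (FbrGen.b i j h.1 h.2) else 1

/-- The defining relations of `Fbr`, each written as a word that is set equal to `1`,
namely `u * v⁻¹` for a relation `u = v`. -/
inductive IsFbrRel : FreeGroup FbrGen → Prop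
  | relA (i j : ℕ) (h : i < j) :
      IsFbrRel (xg j * xg i * (xg i * xg (j + 1))⁻¹)
  | relB1a (r s i j : ℕ) (h0 : 1 ≤ r) (h1 : r < s) (h2 : s < i) (h3 : i < j) :
      IsFbrRel ((ag r s)⁻¹ * ag i j * ag r s * (ag i j)⁻¹)
  | relB1b (i r s j : ℕ) (h0 : 1 ≤ i) (h1 : i < r) (h2 : r < s) (h3 : s < j) :
      IsFbrRel ((ag r s)⁻¹ * ag i j * ag r s * (ag i j)⁻¹)
  | relB2 (r i j : ℕ) (h0 : 1 ≤ r) (h1 : r < i) (h2 : i < j) :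
      IsFbrRel ((ag r i)⁻¹ * ag i j * ag r i * (ag r j * ag i j * (ag r j)⁻¹)⁻¹)
  | relB3 (i s j : ℕ) (h0 : 1 ≤ i) (h1 : i < s) (h2 : s < j) :
      IsFbrRel ((ag i s)⁻¹ * ag i j * ag i s *
        (ag i j * ag s j * ag i j * (ag i j * ag s j)⁻¹)⁻¹)
  | relB4 (r i s j : ℕ) (h0 : 1 ≤ r) (h1 : r < i) (h2 : i < s) (h3 : s < j) :
      IsFbrRel ((ag r s)⁻¹ * ag i j * ag r s *
        (ag r j * ag s j * (ag r j)⁻¹ * (ag s j)⁻¹ * ag i j *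
          (ag r j * ag s j * (ag r j)⁻¹ * (ag s j)⁻¹)⁻¹)⁻¹)
  | relB5a (r s i j : ℕ) (h0 : 1 ≤ r) (h1 : r < s) (h2 : s < i) (h3 : i < j) :
      IsFbrRel ((ag r s)⁻¹ * bg i j * ag r s * (bg i j)⁻¹)
  | relB5b (i r s j : ℕ) (h0 : 1 ≤ i) (h1 : i < r) (h2 : r < s) (h3 : s < j) :
      IsFbrRel ((ag r s)⁻¹ * bg i j * ag r s * (bg i j)⁻¹)
  | relB6 (r i j : ℕ) (h0 : 1 ≤ r) (h1 : r < i) (h2 : i < j) :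
      IsFbrRel ((ag r i)⁻¹ * bg i j * ag r i * (bg r j * bg i j * (bg r j)⁻¹)⁻¹)
  | relB7 (i s j : ℕ) (h0 : 1 ≤ i) (h1 : i < s) (h2 : s < j) :
      IsFbrRel ((ag i s)⁻¹ * bg i j * ag i s *
        (bg i j * bg s j * bg i j * (bg i j * bg s j)⁻¹)⁻¹)
  | relB8 (r i s j : ℕ) (h0 : 1 ≤ r) (h1 : r < i) (h2 : i < s) (h3 : s < j) :
      IsFbrRel ((ag r s)⁻¹ * bg i j * ag r s *
        (bg r j * bg s j * (bg r j)⁻¹ * (bg s j)⁻¹ * bg i j *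
          (bg r j * bg s j * (bg r j)⁻¹ * (bg s j)⁻¹)⁻¹)⁻¹)
  | relC (i j : ℕ) (h0 : 1 ≤ i) (h1 : i < j) :
      IsFbrRel (bg i j * (bg i (j + 1) * ag i j)⁻¹)
  | relD1 (k i j : ℕ) (h0 : 1 ≤ k) (h1 : k < i) (h2 : i < j) :
      IsFbrRel (ag i j * xg (k - 1) * (xg (k - 1) * ag (i + 1) (j + 1))⁻¹)
  | relD2 (i j : ℕ) (h0 : 1 ≤ i) (h1 : i < j) :
      IsFbrRel (ag i j * xg (i - 1) * (xg (i - 1) * ag (i + 1) (j + 1) * ag i (j + 1))⁻¹)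
  | relD3 (i k j : ℕ) (h0 : 1 ≤ i) (h1 : i < k) (h2 : k < j) :
      IsFbrRel (ag i j * xg (k - 1) * (xg (k - 1) * ag i (j + 1))⁻¹)
  | relD4 (i j : ℕ) (h0 : 1 ≤ i) (h1 : i < j) :
      IsFbrRel (ag i j * xg (j - 1) * (xg (j - 1) * ag i (j + 1) * ag i j)⁻¹)
  | relD5 (i j k : ℕ) (h0 : 1 ≤ i) (h1 : i < j) (h2 : j < k) :
      IsFbrRel (ag i j * xg (k - 1) * (xg (k - 1) * ag i j)⁻¹)
  | relD6 (k i j : ℕ) (h0 : 1 ≤ k) (h1 : k < i) (h2 : i < j) :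
      IsFbrRel (bg i j * xg (k - 1) * (xg (k - 1) * bg (i + 1) (j + 1))⁻¹)
  | relD7 (i j : ℕ) (h0 : 1 ≤ i) (h1 : i < j) :
      IsFbrRel (bg i j * xg (i - 1) * (xg (i - 1) * bg (i + 1) (j + 1) * bg i (j + 1))⁻¹)
  | relD8 (i k j : ℕ) (h0 : 1 ≤ i) (h1 : i < k) (h2 : k < j) :
      IsFbrRel (bg i j * xg (k - 1) * (xg (k - 1) * bg i (j + 1))⁻¹)
  | relD9 (i j k : ℕ) (h0 : 1 ≤ i) (h1 : i < j) (h2 : j < k) :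
      IsFbrRel (bg i j * xg (k - 1) * (xg (k - 1) * bg i j)⁻¹)

def fbrRels : Set (FreeGroup FbrGen) := {r | IsFbrRel r}

/-- The braided Thompson group `Fbr` of Brady–Burillo–Cleary–Stein. -/
abbrev Fbr : Type := PresentedGroup fbrRels

/-- The generator `x i` of `Fbr`. -/
def x (i : ℕ) : Fbr := PresentedGroup.of (FbrGen.x i)

/-- The generator `α i j` of `Fbr` (junk value `1` for invalid indices). -/
def al (i j : ℕ) : Fbr :=
  if h : 1 ≤ i ∧ i < j then PresentedGroup.of (FbrGen.a i j h.1 h.2) else 1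

/-- The generator `β i j` of `Fbr` (junk value `1` for invalid indices). -/
def be (i j : ℕ) : Fbr :=
  if h : 1 ≤ i ∧ i < j then PresentedGroup.of (FbrGen.b i j h.1 h.2) else 1

/-!
In the abelianization every relation of the form `g * t = t * h` becomes `g = h`. Relation (A)
then identifies all `x j` with `j ≥ 1`; (D4) kills `α i j` for `j ≥ i + 2`, after which (D2)
identifies all `α i (i + 1)` with `α 1 2`. (D8) identifies all `β 1 j` with `j ≥ 3` and (C)
expresses `β 1 2`; (D6) shifts `β i j` with `i ≥ 2` down to some `β 2 m`, and (D7) together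
with (C) gives `β 2 3 = α 1 2` and `β 2 m = 1` for `m ≥ 4`.
-/

theorem _root_.Abelianization.of_eq_of_mul_eq_mul {G : Type*} [Group G] {g h t : G}
    (e : g * t = t * h) : Abelianization.of g = Abelianization.of h := by
  have := congrArg Abelianization.of e
  rw [map_mul, map_mul, mul_comm (Abelianization.of t)] at this
  exact mul_right_cancel this

theorem _root_.Abelianization.of_eq_mul_of_mul_eq_mul_mul {G : Type*} [Group G] {g h₁ h₂ t : G}
    (e : g * t = t * h₁ * h₂) :
    Abelianization.of g = Abelianization.of h₁ * Abelianization.of h₂ := by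
  rw [← map_mul]
  exact Abelianization.of_eq_of_mul_eq_mul (e.trans (mul_assoc _ _ _))

theorem _root_.PresentedGroup.abelianization_eq_top_of_of_mem {α : Type*}
    {rels : Set (FreeGroup α)} (H : Subgroup (Abelianization (PresentedGroup rels)))
    (h : ∀ a, Abelianization.of (PresentedGroup.of a) ∈ H) : H = ⊤ := by
  have hsurj : Function.Surjective (Abelianization.of : PresentedGroup rels →* _) :=
    QuotientGroup.mk_surjective
  rw [eq_top_iff, ← Subgroup.map_top_of_surjective _ hsurj, ← PresentedGroup.closure_range_of,
    MonoidHom.map_closure, Subgroup.closure_le, ← Set.range_comp]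
  rintro _ ⟨a, rfl⟩
  exact h a

lemma mk_xg (i : ℕ) : PresentedGroup.mk fbrRels (xg i) = x i := rfl

lemma mk_ag (i j : ℕ) : PresentedGroup.mk fbrRels (ag i j) = al i j := by
  unfold ag al
  split
  · rfl
  · exact map_one _

lemma mk_bg (i j : ℕ) : PresentedGroup.mk fbrRels (bg i j) = be i j := by
  unfold bg be
  split
  · rfl
  · exact map_one _

lemma of_a_eq_al {i j : ℕ} (hi : 1 ≤ i) (hij : i < j) :
    PresentedGroup.of (FbrGen.a i j hi hij) = al i j := by
  rw [al, dif_pos ⟨hi, hij⟩]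

lemma of_b_eq_be {i j : ℕ} (hi : 1 ≤ i) (hij : i < j) :
    PresentedGroup.of (FbrGen.b i j hi hij) = be i j := by
  rw [be, dif_pos ⟨hi, hij⟩]

section Relations

variable {i j k : ℕ}

lemma x_mul_x (h : i < j) : x j * x i = x i * x (j + 1) := by
  simpa only [map_mul, mk_xg] using
    PresentedGroup.mk_eq_mk_of_mul_inv_mem (rels := fbrRels) (.relA i j h)

lemma be_eq_be_mul_al (h0 : 1 ≤ i) (h1 : i < j) : be i j = be i (j + 1) * al i j := by
  simpa only [map_mul, mk_ag, mk_bg] using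
    PresentedGroup.mk_eq_mk_of_mul_inv_mem (rels := fbrRels) (.relC i j h0 h1)

lemma al_mul_x_pred_fst (h0 : 1 ≤ i) (h1 : i < j) :
    al i j * x (i - 1) = x (i - 1) * al (i + 1) (j + 1) * al i (j + 1) := by
  simpa only [map_mul, mk_xg, mk_ag] using
    PresentedGroup.mk_eq_mk_of_mul_inv_mem (rels := fbrRels) (.relD2 i j h0 h1)

lemma al_mul_x_pred_snd (h0 : 1 ≤ i) (h1 : i < j) :
    al i j * x (j - 1) = x (j - 1) * al i (j + 1) * al i j := by
  simpa only [map_mul, mk_xg, mk_ag] using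
    PresentedGroup.mk_eq_mk_of_mul_inv_mem (rels := fbrRels) (.relD4 i j h0 h1)

lemma be_mul_x_of_lt (h0 : 1 ≤ k) (h1 : k < i) (h2 : i < j) :
    be i j * x (k - 1) = x (k - 1) * be (i + 1) (j + 1) := by
  simpa only [map_mul, mk_xg, mk_bg] using
    PresentedGroup.mk_eq_mk_of_mul_inv_mem (rels := fbrRels) (.relD6 k i j h0 h1 h2)

lemma be_mul_x_pred_fst (h0 : 1 ≤ i) (h1 : i < j) :
    be i j * x (i - 1) = x (i - 1) * be (i + 1) (j + 1) * be i (j + 1) := by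
  simpa only [map_mul, mk_xg, mk_bg] using
    PresentedGroup.mk_eq_mk_of_mul_inv_mem (rels := fbrRels) (.relD7 i j h0 h1)

lemma be_mul_x_of_lt_of_lt (h0 : 1 ≤ i) (h1 : i < k) (h2 : k < j) :
    be i j * x (k - 1) = x (k - 1) * be i (j + 1) := by
  simpa only [map_mul, mk_xg, mk_bg] using
    PresentedGroup.mk_eq_mk_of_mul_inv_mem (rels := fbrRels) (.relD8 i k j h0 h1 h2)

end Relations

section Abelianization

open Abelianization (of of_eq_of_mul_eq_mul of_eq_mul_of_mul_eq_mul_mul)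

variable {i j : ℕ}

lemma of_x_eq_of_x_one (hj : 1 ≤ j) : of (x j) = of (x 1) := by
  induction j, hj using Nat.le_induction with
  | base => rfl
  | succ j hj ih => rw [← ih, of_eq_of_mul_eq_mul (x_mul_x hj)]

lemma of_al_eq_one (hi : 1 ≤ i) (hij : i + 2 ≤ j) : of (al i j) = 1 := by
  obtain ⟨j, rfl⟩ : ∃ j', j = j' + 1 := ⟨j - 1, by omega⟩
  have e := of_eq_mul_of_mul_eq_mul_mul (al_mul_x_pred_snd hi (by omega : i < j))
  rwa [right_eq_mul] at e

lemma of_al_succ (hi : 1 ≤ i) : of (al i (i + 1)) = of (al 1 2) := by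
  induction i, hi using Nat.le_induction with
  | base => rfl
  | succ i hi ih =>
    have e := of_eq_mul_of_mul_eq_mul_mul (al_mul_x_pred_fst hi (Nat.lt_succ_self i))
    rwa [of_al_eq_one hi le_rfl, mul_one, ih, eq_comm] at e

lemma of_be_one_eq_of_be_one_three (hj : 3 ≤ j) : of (be 1 j) = of (be 1 3) := by
  induction j, hj using Nat.le_induction with
  | base => rfl
  | succ j hj ih =>
    rw [← ih, of_eq_of_mul_eq_mul (be_mul_x_of_lt_of_lt (k := 2) le_rfl one_lt_two hj)]

lemma of_be_one_two : of (be 1 2) = of (be 1 3) * of (al 1 2) := by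
  rw [be_eq_be_mul_al le_rfl one_lt_two, map_mul]

lemma of_be_two_three : of (be 2 3) = of (al 1 2) := by
  have e := of_eq_mul_of_mul_eq_mul_mul (be_mul_x_pred_fst le_rfl one_lt_two)
  rw [of_be_one_two, mul_comm (of (be 2 3)), mul_left_cancel_iff] at e
  exact e.symm

lemma of_be_two_eq_one (hj : 4 ≤ j) : of (be 2 j) = 1 := by
  obtain ⟨j, rfl⟩ : ∃ j', j = j' + 1 := ⟨j - 1, by omega⟩
  have e := of_eq_mul_of_mul_eq_mul_mul (be_mul_x_pred_fst le_rfl (by omega : 1 < j))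
  rwa [of_be_one_eq_of_be_one_three (j := j) (by omega),
    of_be_one_eq_of_be_one_three (j := j + 1) (by omega), right_eq_mul] at e

lemma of_be_add (hi : 2 ≤ i) (hij : i < j) (n : ℕ) :
    of (be (i + n) (j + n)) = of (be i j) := by
  induction n with
  | zero => rfl
  | succ n ih =>
    rw [← ih]
    exact (of_eq_of_mul_eq_mul
      (be_mul_x_of_lt (k := 1) (i := i + n) (j := j + n) le_rfl (by omega) (by omega))).symm

variable {H : Subgroup (Abelianization Fbr)}

lemma of_x_mem (h0 : of (x 0) ∈ H) (h1 : of (x 1) ∈ H) (i : ℕ) : of (x i) ∈ H := by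
  rcases i.eq_zero_or_pos with rfl | hi
  · exact h0
  · rwa [of_x_eq_of_x_one hi]

lemma of_al_mem (ha : of (al 1 2) ∈ H) (hi : 1 ≤ i) (hij : i < j) : of (al i j) ∈ H := by
  obtain rfl | hj := (Nat.succ_le_of_lt hij).eq_or_lt
  · rwa [of_al_succ hi]
  · rw [of_al_eq_one hi hj]
    exact one_mem H

lemma of_be_mem (hb : of (be 1 3) ∈ H) (ha : of (al 1 2) ∈ H) (hi : 1 ≤ i) (hij : i < j) :
    of (be i j) ∈ H := by
  obtain rfl | hi := hi.eq_or_lt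
  · obtain rfl | hj := (Nat.succ_le_of_lt hij).eq_or_lt
    · rw [of_be_one_two]
      exact mul_mem hb ha
    · rwa [of_be_one_eq_of_be_one_three hj]
  · obtain ⟨n, rfl⟩ : ∃ n, i = 2 + n := ⟨i - 2, by omega⟩
    obtain ⟨m, rfl⟩ : ∃ m, j = m + n := ⟨j - n, by omega⟩
    rw [of_be_add le_rfl (by omega) n]
    obtain rfl | hm := (show 3 ≤ m by omega).eq_or_lt
    · rwa [of_be_two_three]
    · rw [of_be_two_eq_one hm]
      exact one_mem H

end Abelianization

/-- The abelianization of `Fbr` is generated by the images of `x 0`, `x 1`, `β 1 3`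
and `α 1 2`. -/
theorem fbr_abelianization_generators :
    Subgroup.closure {Abelianization.of (x 0), Abelianization.of (x 1),
      Abelianization.of (be 1 3), Abelianization.of (al 1 2)} =
      (⊤ : Subgroup (Abelianization Fbr)) := by
  refine PresentedGroup.abelianization_eq_top_of_of_mem _ ?_
  rintro (i | ⟨i, j, hi, hij⟩ | ⟨i, j, hi, hij⟩)
  · exact of_x_mem (Subgroup.subset_closure (by simp)) (Subgroup.subset_closure (by simp)) i
  · rw [of_a_eq_al hi hij]
    exact of_al_mem (Subgroup.subset_closure (by simp)) hi hij
  · rw [of_b_eq_be hi hij]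
    exact of_be_mem (Subgroup.subset_closure (by simp)) (Subgroup.subset_closure (by simp))
      hi hij

end BrThompson
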